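/- arXiv:1506.07833 — 4 statements merged into one kernel-verified Lean document; each statement's English description precedes it below -/
import Mathlib

section
/- For complex ζ and q with |q| < 1 and |q| < |ζ²| < 1, the identity ∑_{ℓ,m≥0} ζ^ℓ ζ'^m q^{ℓm} - ∑_{ℓ,m<0} ζ^ℓ ζ'^m q^{ℓm} = ∑_{ℓ,m≥1}(ζ^ℓ ζ'^m - ζ^{-ℓ}ζ'^{-m}) q^{ℓm} - (ζζ' - 1)/((ζ-1)(ζ'-1)) holds, whenever ζ ≠ 1 and ζ' ≠ 1 and both |q| < |ζ| < 1 and |q| < |ζ'| < 1. -/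
/-! Split `ℕ × ℕ` into the column `ℓ = 0`, the row `ℓ ≥ 1, m = 0` and the quadrant `ℓ, m ≥ 1`.
On the first two pieces `q ^ (ℓ * m) = 1`, so they contribute the geometric series
`1 / (1 - ζ') + ζ / (1 - ζ) = -(ζ ζ' - 1) / ((ζ - 1) (ζ' - 1))`, and the quadrant is the positive
part of the right-hand side. The negative double series converges because
its terms are `q / (ζ ζ') · (q / ζ) ^ ℓ (q / ζ') ^ m q ^ (ℓ m)`. -/

section Summable

variable {α : Type*} [AddCommGroup α] [UniformSpace α] [IsUniformAddGroup α] [CompleteSpace α]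
  {f : ℕ × ℕ → α}

theorem Summable.comp_prodMap_succ (hf : Summable f) :
    Summable fun p : ℕ × ℕ => f (p.1 + 1, p.2 + 1) :=
  hf.comp_injective (Nat.succ_injective.prodMap Nat.succ_injective)

theorem Summable.tsum_prod_nat_eq_add_add [T0Space α] (hf : Summable f) :
    ∑' p, f p = ∑' m, f (0, m) + ∑' ℓ, f (ℓ + 1, 0) + ∑' p : ℕ × ℕ, f (p.1 + 1, p.2 + 1) := by
  have hshift := hf.comp_prodMap_succ
  have hrow : Summable fun ℓ : ℕ => f (ℓ + 1, 0) :=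
    hf.comp_injective fun _ _ h => by simpa using h
  rw [hf.tsum_prod, hf.prod.tsum_eq_zero_add, hshift.tsum_prod, add_assoc,
    ← hrow.tsum_add hshift.prod]
  congr 2 with ℓ
  exact (hf.prod_factor (ℓ + 1)).tsum_eq_zero_add

end Summable

section NormedField

variable {𝕜 : Type*} [NormedField 𝕜] [CompleteSpace 𝕜] {x y q : 𝕜}

theorem summable_pow_mul_pow_mul_pow_mul (hx : ‖x‖ < 1) (hy : ‖y‖ < 1) (hq : ‖q‖ ≤ 1) :
    Summable fun p : ℕ × ℕ => x ^ p.1 * y ^ p.2 * q ^ (p.1 * p.2) := by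
  refine Summable.of_norm_bounded ((summable_geometric_of_lt_one (norm_nonneg x) hx).mul_of_nonneg
    (summable_geometric_of_lt_one (norm_nonneg y) hy) (fun _ => by positivity)
    (fun _ => by positivity)) fun p => ?_
  simp only [norm_mul, norm_pow]
  exact mul_le_of_le_one_right (by positivity) (pow_le_one₀ (norm_nonneg q) hq)

theorem summable_zpow_neg_mul_zpow_neg_mul_pow (hx : ‖q‖ < ‖x‖) (hy : ‖q‖ < ‖y‖) (hq : ‖q‖ ≤ 1) :
    Summable fun p : ℕ × ℕ =>
      x ^ (-(p.1 + 1) : ℤ) * y ^ (-(p.2 + 1) : ℤ) * q ^ ((p.1 + 1) * (p.2 + 1)) := by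
  have hx0 : x ≠ 0 := norm_pos_iff.mp ((norm_nonneg q).trans_lt hx)
  have hy0 : y ≠ 0 := norm_pos_iff.mp ((norm_nonneg q).trans_lt hy)
  have hqx : ‖q / x‖ < 1 := by rwa [norm_div, div_lt_one (norm_pos_iff.mpr hx0)]
  have hqy : ‖q / y‖ < 1 := by rwa [norm_div, div_lt_one (norm_pos_iff.mpr hy0)]
  refine ((summable_pow_mul_pow_mul_pow_mul hqx hqy hq).mul_left (q / (x * y))).congr fun p => ?_
  rw [zpow_neg, zpow_neg, div_pow, div_pow]
  norm_cast
  field_simp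
  ring

end NormedField

theorem tsum_geometric_succ_of_norm_lt_one {K : Type*} [NormedDivisionRing K] [CompleteSpace K]
    {ξ : K} (h : ‖ξ‖ < 1) : ∑' n : ℕ, ξ ^ (n + 1) = ξ * (1 - ξ)⁻¹ := by
  simp_rw [pow_succ']
  rw [tsum_mul_left, tsum_geometric_of_norm_lt_one h]

theorem stmt6_general (q ζ ζ' : ℂ) (hq : ‖q‖ < 1)
    (h1 : ‖q‖ < ‖ζ‖) (h2 : ‖ζ‖ < 1) (h1' : ‖q‖ < ‖ζ'‖) (h2' : ‖ζ'‖ < 1)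
    (hζ : ζ ≠ 1) (hζ' : ζ' ≠ 1) :
    (∑' p : ℕ × ℕ, ζ ^ p.1 * ζ' ^ p.2 * q ^ (p.1 * p.2))
      - ∑' p : ℕ × ℕ, ζ ^ (-(p.1 + 1) : ℤ) * ζ' ^ (-(p.2 + 1) : ℤ) * q ^ ((p.1 + 1) * (p.2 + 1))
      = (∑' p : ℕ × ℕ,
          (ζ ^ (p.1 + 1) * ζ' ^ (p.2 + 1) - ζ ^ (-(p.1 + 1) : ℤ) * ζ' ^ (-(p.2 + 1) : ℤ))
            * q ^ ((p.1 + 1) * (p.2 + 1)))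
        - (ζ * ζ' - 1) / ((ζ - 1) * (ζ' - 1)) := by
  have hpos := summable_pow_mul_pow_mul_pow_mul h2 h2' hq.le
  have hneg := summable_zpow_neg_mul_zpow_neg_mul_pow h1 h1' hq.le
  have hquadrant := hpos.comp_prodMap_succ
  beta_reduce at hquadrant
  have hrhs : ∑' p : ℕ × ℕ,
      (ζ ^ (p.1 + 1) * ζ' ^ (p.2 + 1) - ζ ^ (-(p.1 + 1) : ℤ) * ζ' ^ (-(p.2 + 1) : ℤ))
        * q ^ ((p.1 + 1) * (p.2 + 1))
      = (∑' p : ℕ × ℕ, ζ ^ (p.1 + 1) * ζ' ^ (p.2 + 1) * q ^ ((p.1 + 1) * (p.2 + 1)))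
        - ∑' p : ℕ × ℕ,
          ζ ^ (-(p.1 + 1) : ℤ) * ζ' ^ (-(p.2 + 1) : ℤ) * q ^ ((p.1 + 1) * (p.2 + 1)) := by
    rw [← hquadrant.tsum_sub hneg]
    simp_rw [sub_mul]
  have hrational : (1 - ζ')⁻¹ + ζ * (1 - ζ)⁻¹ = -((ζ * ζ' - 1) / ((ζ - 1) * (ζ' - 1))) := by
    have : ζ - 1 ≠ 0 := sub_ne_zero.mpr hζ
    have : ζ' - 1 ≠ 0 := sub_ne_zero.mpr hζ'
    field_simp
    ring
  rw [hrhs, hpos.tsum_prod_nat_eq_add_add]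
  simp only [pow_zero, one_mul, zero_mul, mul_zero, mul_one]
  rw [tsum_geometric_of_norm_lt_one h2', tsum_geometric_succ_of_norm_lt_one h2]
  linear_combination hrational

theorem stmt6 (q ζ ζ' : ℂ) (hq0 : 0 < ‖q‖) (hq : ‖q‖ < 1)
    (h1 : ‖q‖ < ‖ζ‖) (h2 : ‖ζ‖ < 1) (h1' : ‖q‖ < ‖ζ'‖) (h2' : ‖ζ'‖ < 1)
    (hζ : ζ ≠ 1) (hζ' : ζ' ≠ 1) :
    (∑' p : ℕ × ℕ, ζ ^ p.1 * ζ' ^ p.2 * q ^ (p.1 * p.2))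
      - ∑' p : ℕ × ℕ, ζ ^ (-(p.1 + 1) : ℤ) * ζ' ^ (-(p.2 + 1) : ℤ) * q ^ ((p.1 + 1) * (p.2 + 1))
      = (∑' p : ℕ × ℕ,
          (ζ ^ (p.1 + 1) * ζ' ^ (p.2 + 1) - ζ ^ (-(p.1 + 1) : ℤ) * ζ' ^ (-(p.2 + 1) : ℤ))
            * q ^ ((p.1 + 1) * (p.2 + 1)))
        - (ζ * ζ' - 1) / ((ζ - 1) * (ζ' - 1)) :=
  stmt6_general q ζ ζ' hq h1 h2 h1' h2' hζ hζ'
end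

section
/- For τ ∈ ℍ and z₁, z₂ ∈ ℂ with 0 < Im(z₁), Im(z₂) < Im(τ), the geometric-series rearrangement ∑_{ℓ∈ℤ} ζ₁^ℓ/(1 - ζ₂ q^ℓ) = ∑_{ℓ,m≥1} (ζ₁^ℓ ζ₂^m - ζ₁^{-ℓ} ζ₂^{-m}) q^{ℓm} - (ζ₁ζ₂ - 1)/((ζ₁-1)(ζ₂-1)) holds, provided ζ₁ ≠ 1 and ζ₂ ≠ 1, where ζⱼ = e^{2πizⱼ}, q = e^{2πiτ}. -/
/-!
Split the bilateral sum at `l = 0`. For `l = n + 1 > 0`, expand `1 / (1 - y q^l)` as a geometric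
series in `y q^l`: the constant terms give `x / (1 - x)` and the rest the double series
`∑_{n,m ≥ 1} x^n y^m q^{nm}`. For `l = -n < 0`, with `r = y⁻¹ q^n` one has
`x^l / (1 - y q^l) = -x^{-n} r / (1 - r)`, so the same expansion with `x, y` replaced by
`x⁻¹, y⁻¹` produces minus the second double series. Together with the `l = 0` term `1 / (1 - y)`,
the constant terms make up the rational correction. The double series converge absolutely because
`|q| < |x|, |y| < 1`.
-/

section Lambert

variable {𝕜 : Type*} [NormedField 𝕜]

theorem norm_mul_lt_one_of_norm_le_one {z q : 𝕜} (hz : ‖z‖ < 1) (hq : ‖q‖ ≤ 1) :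
    ‖z * q‖ < 1 := by
  rw [norm_mul]
  exact (mul_le_of_le_one_right (norm_nonneg _) hq).trans_lt hz

theorem norm_inv_mul_lt_one {z q : 𝕜} (h : ‖q‖ < ‖z‖) : ‖z⁻¹ * q‖ < 1 := by
  rw [norm_mul, norm_inv, inv_mul_lt_one₀ ((norm_nonneg q).trans_lt h)]
  exact h

theorem norm_mul_pow_succ_lt_one {b c : 𝕜} (hbc : ‖b * c‖ < 1) (hc : ‖c‖ ≤ 1) (n : ℕ) :
    ‖b * c ^ (n + 1)‖ < 1 := by
  rw [pow_succ', ← mul_assoc]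
  exact norm_mul_lt_one_of_norm_le_one hbc (norm_pow c n ▸ pow_le_one₀ (norm_nonneg _) hc)

variable [CompleteSpace 𝕜]

theorem summable_lambert {a b c : 𝕜} (hac : ‖a * c‖ < 1) (hbc : ‖b * c‖ < 1) (hc : ‖c‖ ≤ 1) :
    Summable fun p : ℕ × ℕ => a ^ (p.1 + 1) * b ^ (p.2 + 1) * c ^ ((p.1 + 1) * (p.2 + 1)) := by
  have hgeom : Summable fun p : ℕ × ℕ => ‖a * c‖ ^ p.1 * ‖b * c‖ ^ p.2 :=
    (summable_geometric_of_lt_one (norm_nonneg _) hac).mul_of_nonneg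
      (summable_geometric_of_lt_one (norm_nonneg _) hbc) (fun _ => by positivity)
      (fun _ => by positivity)
  refine .of_norm_bounded (hgeom.mul_left (‖a * c‖ * ‖b‖)) fun ⟨n, m⟩ => ?_
  -- `(n + 1) (m + 1) = (n + 1) + m + n m`, and `‖c ^ (n m)‖ ≤ 1` absorbs the last part.
  have hsplit : a ^ (n + 1) * b ^ (m + 1) * c ^ ((n + 1) * (m + 1))
      = a * c * b * ((a * c) ^ n * (b * c) ^ m) * c ^ (n * m) := by ring
  rw [hsplit, norm_mul _ (c ^ _), norm_pow c]
  calc _ ≤ ‖a * c * b * ((a * c) ^ n * (b * c) ^ m)‖ * 1 := by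
        gcongr; exact pow_le_one₀ (norm_nonneg _) hc
    _ = ‖a * c‖ * ‖b‖ * (‖a * c‖ ^ n * ‖b * c‖ ^ m) := by simp only [norm_mul, norm_pow, mul_one]

theorem hasSum_lambert {a b c : 𝕜} (hac : ‖a * c‖ < 1) (hbc : ‖b * c‖ < 1) (hc : ‖c‖ ≤ 1) :
    HasSum (fun n : ℕ => a ^ (n + 1) * (b * c ^ (n + 1) / (1 - b * c ^ (n + 1))))
      (∑' p : ℕ × ℕ, a ^ (p.1 + 1) * b ^ (p.2 + 1) * c ^ ((p.1 + 1) * (p.2 + 1))) := by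
  refine (summable_lambert hac hbc hc).hasSum.prod_fiberwise fun n => ?_
  rw [mul_div_assoc', div_eq_mul_inv]
  exact ((hasSum_geometric_of_norm_lt_one (norm_mul_pow_succ_lt_one hbc hc n)).mul_left
    (a ^ (n + 1) * (b * c ^ (n + 1)))).congr_fun fun m => by dsimp only; ring

theorem hasSum_pow_div_one_sub_mul_pow {x y q : 𝕜} (hx : ‖x‖ < 1) (hy : ‖y‖ < 1)
    (hq : ‖q‖ ≤ 1) :
    HasSum (fun n : ℕ => x ^ n / (1 - y * q ^ n))
      ((1 - y)⁻¹ + (x / (1 - x)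
        + ∑' p : ℕ × ℕ, x ^ (p.1 + 1) * y ^ (p.2 + 1) * q ^ ((p.1 + 1) * (p.2 + 1)))) := by
  have hyq := norm_mul_lt_one_of_norm_le_one hy hq
  have hgeom : HasSum (fun n : ℕ => x ^ (n + 1)) (x / (1 - x)) := by
    rw [div_eq_mul_inv]
    exact ((hasSum_geometric_of_norm_lt_one hx).mul_left x).congr_fun fun n => pow_succ' x n
  have hshift : HasSum (fun n : ℕ => x ^ (n + 1) / (1 - y * q ^ (n + 1))) _ :=
    (hgeom.add (hasSum_lambert (norm_mul_lt_one_of_norm_le_one hx hq) hyq hq)).congr_fun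
      fun n => by
        have := (isUnit_one_sub_of_norm_lt_one (norm_mul_pow_succ_lt_one hyq hq n)).ne_zero
        field_simp
        ring
  simpa only [pow_zero, mul_one, one_div] using
    HasSum.zero_add (f := fun n : ℕ => x ^ n / (1 - y * q ^ n)) hshift

theorem hasSum_inv_pow_div_one_sub_mul_inv_pow {x y q : 𝕜} (hqx : ‖q‖ < ‖x‖)
    (hqy : ‖q‖ < ‖y‖) (hq : ‖q‖ ≤ 1) (hq0 : q ≠ 0) :
    HasSum (fun n : ℕ => x⁻¹ ^ (n + 1) / (1 - y * q⁻¹ ^ (n + 1)))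
      (-∑' p : ℕ × ℕ, x⁻¹ ^ (p.1 + 1) * y⁻¹ ^ (p.2 + 1) * q ^ ((p.1 + 1) * (p.2 + 1))) := by
  have hy0 : y ≠ 0 := norm_pos_iff.mp ((norm_nonneg q).trans_lt hqy)
  have hyq := norm_inv_mul_lt_one hqy
  refine (hasSum_lambert (norm_inv_mul_lt_one hqx) hyq hq).neg.congr_fun fun n => ?_
  have hne : q ^ (n + 1) ≠ y := fun h =>
    (isUnit_one_sub_of_norm_lt_one (norm_mul_pow_succ_lt_one hyq hq n)).ne_zero
      (by rw [h, inv_mul_cancel₀ hy0, sub_self])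
  have hQ : q ^ (n + 1) ≠ 0 := pow_ne_zero _ hq0
  rw [inv_pow q, ← div_eq_mul_inv y, inv_mul_eq_div, one_sub_div hQ, one_sub_div hy0]
  have := sub_ne_zero.mpr hne
  field_simp
  ring

theorem tsum_zpow_div_one_sub_mul_zpow {x y q : 𝕜} (hx : ‖x‖ < 1) (hy : ‖y‖ < 1)
    (hqx : ‖q‖ < ‖x‖) (hqy : ‖q‖ < ‖y‖) (hx1 : x ≠ 1) (hy1 : y ≠ 1) (hq0 : q ≠ 0) :
    ∑' l : ℤ, x ^ l / (1 - y * q ^ l)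
      = (∑' p : ℕ × ℕ, (x ^ (p.1 + 1) * y ^ (p.2 + 1)
            - x ^ (-(p.1 + 1) : ℤ) * y ^ (-(p.2 + 1) : ℤ)) * q ^ ((p.1 + 1) * (p.2 + 1)))
        - (x * y - 1) / ((x - 1) * (y - 1)) := by
  have hq : ‖q‖ ≤ 1 := (hqx.trans hx).le
  have hsum := HasSum.of_nat_of_neg_add_one (f := fun l : ℤ => x ^ l / (1 - y * q ^ l))
    (by simpa only [zpow_natCast] using hasSum_pow_div_one_sub_mul_pow hx hy hq)
    (by
      simp only [← Int.negSucc_eq, zpow_negSucc, ← inv_pow]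
      exact hasSum_inv_pow_div_one_sub_mul_inv_pow hqx hqy hq hq0)
  simp only [← Int.negSucc_eq, zpow_negSucc, ← inv_pow]
  have hpos := summable_lambert (norm_mul_lt_one_of_norm_le_one hx hq)
    (norm_mul_lt_one_of_norm_le_one hy hq) hq
  have hneg := summable_lambert (norm_inv_mul_lt_one hqx) (norm_inv_mul_lt_one hqy) hq
  rw [hsum.tsum_eq, ((hpos.hasSum.sub hneg.hasSum).congr_fun fun p => sub_mul _ _ _).tsum_eq]
  have hboundary : (1 - y)⁻¹ + x / (1 - x) = -((x * y - 1) / ((x - 1) * (y - 1))) := by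
    have := sub_ne_zero.mpr hx1
    have := sub_ne_zero.mpr hy1
    field_simp
    ring
  linear_combination hboundary

end Lambert

open Complex Real in
theorem norm_exp_two_pi_I_mul_lt {z w : ℂ} (h : z.im < w.im) :
    ‖cexp (2 * π * I * w)‖ < ‖cexp (2 * π * I * z)‖ := by
  simp only [norm_exp, Real.exp_lt_exp, mul_re, mul_im, ofReal_re, ofReal_im, I_re, I_im,
    re_ofNat, im_ofNat]
  nlinarith [Real.pi_pos]

theorem stmt11_general (τ z₁ z₂ : ℂ)
    (h₁ : 0 < z₁.im) (h₁' : z₁.im < τ.im) (h₂ : 0 < z₂.im) (h₂' : z₂.im < τ.im)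
    (hz₁ : Complex.exp (2 * Real.pi * Complex.I * z₁) ≠ 1)
    (hz₂ : Complex.exp (2 * Real.pi * Complex.I * z₂) ≠ 1) :
    ∑' l : ℤ, Complex.exp (2 * Real.pi * Complex.I * z₁) ^ l /
        (1 - Complex.exp (2 * Real.pi * Complex.I * z₂) *
          Complex.exp (2 * Real.pi * Complex.I * τ) ^ l)
      = (∑' p : ℕ × ℕ,
          (Complex.exp (2 * Real.pi * Complex.I * z₁) ^ (p.1 + 1) *
              Complex.exp (2 * Real.pi * Complex.I * z₂) ^ (p.2 + 1)
            - Complex.exp (2 * Real.pi * Complex.I * z₁) ^ (-(p.1 + 1) : ℤ) *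
              Complex.exp (2 * Real.pi * Complex.I * z₂) ^ (-(p.2 + 1) : ℤ))
            * Complex.exp (2 * Real.pi * Complex.I * τ) ^ ((p.1 + 1) * (p.2 + 1)))
        - (Complex.exp (2 * Real.pi * Complex.I * z₁) *
              Complex.exp (2 * Real.pi * Complex.I * z₂) - 1) /
          ((Complex.exp (2 * Real.pi * Complex.I * z₁) - 1) *
            (Complex.exp (2 * Real.pi * Complex.I * z₂) - 1)) := by
  exact tsum_zpow_div_one_sub_mul_zpow (UpperHalfPlane.norm_exp_two_pi_I_lt_one ⟨z₁, h₁⟩)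
    (UpperHalfPlane.norm_exp_two_pi_I_lt_one ⟨z₂, h₂⟩) (norm_exp_two_pi_I_mul_lt h₁')
    (norm_exp_two_pi_I_mul_lt h₂') hz₁ hz₂ (Complex.exp_ne_zero _)

theorem stmt11 (τ z₁ z₂ : ℂ) (hτ : 0 < τ.im)
    (h₁ : 0 < z₁.im) (h₁' : z₁.im < τ.im) (h₂ : 0 < z₂.im) (h₂' : z₂.im < τ.im)
    (hz₁ : Complex.exp (2 * Real.pi * Complex.I * z₁) ≠ 1)
    (hz₂ : Complex.exp (2 * Real.pi * Complex.I * z₂) ≠ 1) :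
    ∑' l : ℤ, Complex.exp (2 * Real.pi * Complex.I * z₁) ^ l /
        (1 - Complex.exp (2 * Real.pi * Complex.I * z₂) *
          Complex.exp (2 * Real.pi * Complex.I * τ) ^ l)
      = (∑' p : ℕ × ℕ,
          (Complex.exp (2 * Real.pi * Complex.I * z₁) ^ (p.1 + 1) *
              Complex.exp (2 * Real.pi * Complex.I * z₂) ^ (p.2 + 1)
            - Complex.exp (2 * Real.pi * Complex.I * z₁) ^ (-(p.1 + 1) : ℤ) *
              Complex.exp (2 * Real.pi * Complex.I * z₂) ^ (-(p.2 + 1) : ℤ))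
            * Complex.exp (2 * Real.pi * Complex.I * τ) ^ ((p.1 + 1) * (p.2 + 1)))
        - (Complex.exp (2 * Real.pi * Complex.I * z₁) *
              Complex.exp (2 * Real.pi * Complex.I * z₂) - 1) /
          ((Complex.exp (2 * Real.pi * Complex.I * z₁) - 1) *
            (Complex.exp (2 * Real.pi * Complex.I * z₂) - 1)) :=
  stmt11_general τ z₁ z₂ h₁ h₁' h₂ h₂' hz₁ hz₂
end

section
/- The μ-function satisfies μ(z₁, z₂; τ) + ζ₂ζ₁⁻¹ q^{-1/2} μ(z₁+τ, z₂; τ) = -i ζ₂^{1/2} ζ₁^{-1/2} q^{-1/8} for all z₁, z₂ ∈ ℂ \ (ℤτ + ℤ), where ζⱼ = e^{2πizⱼ}, ζⱼ^{1/2} = e^{πizⱼ}, and q^{s} = e^{2πisτ}. -/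
/-- The Jacobi theta function ϑ(z;τ) = ∑_{n ∈ 1/2+ℤ} q^{n²/2} e^{2πi(z+1/2)n}. -/
noncomputable def jTheta (z τ : ℂ) : ℂ :=
  ∑' n : ℤ, Complex.exp (Real.pi * Complex.I * τ * ((n : ℂ) + 1 / 2) ^ 2) *
    Complex.exp (2 * Real.pi * Complex.I * (z + 1 / 2) * ((n : ℂ) + 1 / 2))

/-- Zwegers' μ-function, μ(z₁,z₂;τ) = (ζ₁^{1/2}/ϑ(z₂;τ)) ∑_{n∈ℤ} (-ζ₂)ⁿ q^{n(n+1)/2}/(1-ζ₁qⁿ). -/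
noncomputable def mu (z₁ z₂ τ : ℂ) : ℂ :=
  Complex.exp (Real.pi * Complex.I * z₁) / jTheta z₂ τ *
    ∑' n : ℤ, (-Complex.exp (2 * Real.pi * Complex.I * z₂)) ^ n *
        Complex.exp (Real.pi * Complex.I * τ * (n : ℂ) * ((n : ℂ) + 1)) /
      (1 - Complex.exp (2 * Real.pi * Complex.I * z₁) *
        Complex.exp (2 * Real.pi * Complex.I * τ) ^ n)

/-- `z` does not lie in the lattice ℤτ + ℤ. -/
def NotLattice (z τ : ℂ) : Prop := ∀ m n : ℤ, z ≠ m * τ + n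

/-!
Write `ζ = e^{2πiz₁}` and `q = e^{2πiτ}`. Replacing `z₁` by `z₁ + τ` and reindexing `n ↦ n - 1`
gives the second μ-series the same denominators `1 - ζqⁿ` as the first; in the combination of the
theorem the numerators then carry the factor `qⁿ - ζ⁻¹ = -ζ⁻¹ (1 - ζqⁿ)`, which cancels the
denominator and leaves `-ζ⁻¹ ∑ (-ζ₂)ⁿ q^{n(n-1)/2}`, a multiple of `ϑ(z₂)`.

Dividing by `ϑ(z₂)` requires `ϑ(z₂) ≠ 0` off the lattice. When `Im τ ≥ 1/2` and (after a
quasi-period shift) `|Im z| ≤ Im τ / 2`, the pair of terms `n = 0, -1`, equal to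
`-2 q^{1/8} sin(πz)`, dominates the rest of the series. Smaller `Im τ` is reduced to this case by
`τ ↦ τ + m` and `τ ↦ -1/τ`: once `|Re τ| ≤ 1/2`, inversion at least doubles `Im τ`.
-/

open Complex Filter Topology
open scoped Real

lemma norm_geom_sum₂_le {A : Type*} [NormedRing A] [NormOneClass A] {x y : A} {R : ℝ}
    (hx : ‖x‖ ≤ R) (hy : ‖y‖ ≤ R) (n : ℕ) :
    ‖∑ i ∈ Finset.range n, x ^ i * y ^ (n - 1 - i)‖ ≤ n * R ^ (n - 1) := by
  have hR : 0 ≤ R := (norm_nonneg x).trans hx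
  calc ‖∑ i ∈ Finset.range n, x ^ i * y ^ (n - 1 - i)‖
      ≤ ∑ i ∈ Finset.range n, ‖x ^ i * y ^ (n - 1 - i)‖ := norm_sum_le _ _
    _ ≤ ∑ _i ∈ Finset.range n, R ^ (n - 1) := by
        refine Finset.sum_le_sum fun i hi => ?_
        have hi : i ≤ n - 1 := Nat.le_sub_one_of_lt (Finset.mem_range.mp hi)
        calc ‖x ^ i * y ^ (n - 1 - i)‖ ≤ ‖x‖ ^ i * ‖y‖ ^ (n - 1 - i) :=
              (norm_mul_le _ _).trans (mul_le_mul (norm_pow_le _ _) (norm_pow_le _ _)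
                (norm_nonneg _) (by positivity))
          _ ≤ R ^ i * R ^ (n - 1 - i) := by gcongr
          _ = R ^ (n - 1) := by rw [← pow_add, Nat.add_sub_cancel' hi]
    _ = n * R ^ (n - 1) := by rw [Finset.sum_const, Finset.card_range, nsmul_eq_mul]

lemma tsum_ne_zero_of_norm_le_geometric {E : Type*} [NormedAddCommGroup E] [CompleteSpace E]
    {G : ℕ → E} {c r : ℝ} (h0 : G 0 ≠ 0) (hc : 0 ≤ c) (hr : 0 ≤ r) (hcr : c + r < 1)
    (hG : ∀ n, ‖G (n + 1)‖ ≤ ‖G 0‖ * c * r ^ n) :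
    ∑' n, G n ≠ 0 := by
  have hr1 : r < 1 := by linarith
  have hgeom : HasSum (fun n => ‖G 0‖ * c * r ^ n) (‖G 0‖ * c * (1 - r)⁻¹) :=
    (hasSum_geometric_of_lt_one hr hr1).mul_left _
  have htail : ‖∑' n, G (n + 1)‖ < ‖G 0‖ := by
    refine (tsum_of_norm_bounded hgeom hG).trans_lt ?_
    have : c * (1 - r)⁻¹ < 1 := by
      rw [← div_eq_mul_inv, div_lt_one (by linarith)]
      linarith
    simpa [mul_assoc] using mul_lt_mul_of_pos_left this (norm_pos_iff.mpr h0)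
  rw [tsum_eq_zero_add' (hgeom.summable.of_norm_bounded hG)]
  intro h
  rw [eq_neg_of_add_eq_zero_left h, norm_neg] at htail
  exact lt_irrefl _ htail

lemma exp_neg_pi_div_two_le : Real.exp (-(π / 2)) ≤ 1 / 4 := by
  rw [Real.exp_neg, inv_le_comm₀ (Real.exp_pos _) (by norm_num),
    show π / 2 = 1 + (π / 2 - 1) by ring, Real.exp_add]
  have he : (2.7182818283 : ℝ) < Real.exp 1 := Real.exp_one_gt_d9
  have hlin : π / 2 - 1 + 1 ≤ Real.exp (π / 2 - 1) := Real.add_one_le_exp _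
  nlinarith [Real.pi_gt_d2]

lemma two_mul_add_one_mul_pow_sq_le {x : ℝ} (hx0 : 0 ≤ x) (hx1 : x ≤ 1) (n : ℕ) :
    (2 * (n + 1 : ℕ) + 1) * x ^ (n + 1) ^ 2 ≤ 3 * x * (3 * x ^ 2) ^ n := by
  have hlin : (2 * (n + 1 : ℕ) + 1 : ℝ) ≤ 3 ^ (n + 1) := by
    have := one_add_mul_le_pow (show (-2 : ℝ) ≤ 2 by norm_num) (n + 1)
    norm_num at this ⊢
    linarith
  have hpow : x ^ (n + 1) ^ 2 ≤ x ^ (2 * n + 1) := pow_le_pow_of_le_one hx0 hx1 (by nlinarith)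
  calc (2 * (n + 1 : ℕ) + 1) * x ^ (n + 1) ^ 2 ≤ 3 ^ (n + 1) * x ^ (2 * n + 1) := by gcongr
    _ = 3 * x * (3 * x ^ 2) ^ n := by ring

lemma norm_exp_pi_mul_I (w : ℂ) : ‖cexp (π * I * w)‖ = Real.exp (-(π * w.im)) := by
  rw [Complex.norm_exp]
  congr 1
  simp

namespace NotLattice

variable {z τ : ℂ}

lemma ne_intCast (h : NotLattice z τ) (k : ℤ) : z ≠ k := by
  simpa using h 0 k

lemma sub_int_mul (h : NotLattice z τ) (m : ℤ) : NotLattice (z - m * τ) τ := by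
  intro p q hpq
  exact h (p + m) q (by push_cast; linear_combination hpq)

lemma add_int_right (h : NotLattice z τ) (m : ℤ) : NotLattice z (τ + m) := by
  intro p q hpq
  exact h p (p * m + q) (by push_cast; linear_combination hpq)

lemma div_neg_inv (h : NotLattice z τ) (hτ : τ ≠ 0) : NotLattice (z / τ) (-1 / τ) := by
  intro p q hpq
  refine h q (-p) ?_
  rw [div_eq_iff hτ, add_mul, mul_assoc, div_mul_cancel₀ _ hτ] at hpq
  push_cast
  linear_combination hpq

end NotLattice

noncomputable def jThetaTerm (z τ : ℂ) (n : ℤ) : ℂ :=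
  cexp (π * I * τ * ((n : ℂ) + 1 / 2) ^ 2) * cexp (2 * π * I * (z + 1 / 2) * ((n : ℂ) + 1 / 2))

lemma jTheta_eq_tsum_jThetaTerm (z τ : ℂ) : jTheta z τ = ∑' n, jThetaTerm z τ n := rfl

lemma jThetaTerm_eq_jacobiTheta₂_term (z τ : ℂ) (n : ℤ) :
    jThetaTerm z τ n = cexp (π * I * τ / 4 + π * I * (z + 1 / 2)) *
      jacobiTheta₂_term n (z + (1 + τ) / 2) τ := by
  rw [jThetaTerm, jacobiTheta₂_term, ← Complex.exp_add, ← Complex.exp_add]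
  ring_nf

lemma jTheta_eq_jacobiTheta₂ (z τ : ℂ) :
    jTheta z τ = cexp (π * I * τ / 4 + π * I * (z + 1 / 2)) *
      jacobiTheta₂ (z + (1 + τ) / 2) τ := by
  simp only [jTheta_eq_tsum_jThetaTerm, jThetaTerm_eq_jacobiTheta₂_term, tsum_mul_left,
    jacobiTheta₂]

lemma summable_jThetaTerm {τ : ℂ} (hτ : 0 < τ.im) (z : ℂ) : Summable (jThetaTerm z τ) := by
  simp_rw [funext (jThetaTerm_eq_jacobiTheta₂_term z τ)]
  exact ((summable_jacobiTheta₂_term_iff _ τ).mpr hτ).mul_left _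

lemma jTheta_add_int_mul_left (z τ : ℂ) (m : ℤ) :
    jTheta (z + m * τ) τ =
      cexp (-(π * I * τ * m ^ 2) - 2 * π * I * m * z - π * I * m) * jTheta z τ := by
  rw [jTheta_eq_tsum_jThetaTerm, jTheta_eq_tsum_jThetaTerm, ← tsum_mul_left]
  conv_rhs => rw [← (Equiv.addRight m).tsum_eq]
  refine tsum_congr fun n => ?_
  simp only [Equiv.coe_addRight, jThetaTerm, ← Complex.exp_add, Int.cast_add]
  ring_nf

lemma jTheta_add_int_right (z τ : ℂ) (m : ℤ) :
    jTheta z (τ + m) = cexp (π * I * m / 4) * jTheta z τ := by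
  rw [jTheta_eq_tsum_jThetaTerm, jTheta_eq_tsum_jThetaTerm, ← tsum_mul_left]
  refine tsum_congr fun n => ?_
  obtain ⟨k, hk⟩ := Int.even_mul_succ_self n
  have hk' : (n : ℂ) * (n + 1) = k + k := by exact_mod_cast hk
  have hperiod : cexp (π * I * τ * ((n : ℂ) + 1 / 2) ^ 2 + (m * k : ℤ) * (2 * π * I)) =
      cexp (π * I * τ * ((n : ℂ) + 1 / 2) ^ 2) := by
    rw [Complex.exp_add, Complex.exp_int_mul_two_pi_mul_I, mul_one]
  rw [jThetaTerm, jThetaTerm, ← hperiod]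
  simp only [← Complex.exp_add]
  congr 1
  push_cast
  linear_combination (π * I * m) * hk'

lemma jTheta_eq_zero_iff_jTheta_div_eq_zero {τ : ℂ} (hτ : τ ≠ 0) (z : ℂ) :
    jTheta z τ = 0 ↔ jTheta (z / τ) (-1 / τ) = 0 := by
  set w := z + (τ - 1) / 2
  have h_left : jTheta z τ = cexp (π * I * τ / 4 + π * I * (z + 1 / 2)) * jacobiTheta₂ w τ := by
    rw [jTheta_eq_jacobiTheta₂, ← jacobiTheta₂_add_left w]
    congr 2
    ring
  have h_right : jTheta (z / τ) (-1 / τ) =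
      cexp (π * I * (-1 / τ) / 4 + π * I * (z / τ + 1 / 2)) * jacobiTheta₂ (w / τ) (-1 / τ) := by
    rw [jTheta_eq_jacobiTheta₂]
    congr 2
    field_simp
    ring
  have hfactor : 1 / (-I * τ) ^ (1 / 2 : ℂ) * cexp (-π * I * w ^ 2 / τ) ≠ 0 := by
    refine mul_ne_zero (one_div_ne_zero ?_) (Complex.exp_ne_zero _)
    exact (Complex.cpow_ne_zero_iff_of_exponent_ne_zero (by norm_num)).mpr
      (mul_ne_zero (neg_ne_zero.mpr I_ne_zero) hτ)
  rw [h_left, h_right, jacobiTheta₂_functional_equation w τ, mul_assoc]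
  simp only [mul_eq_zero, Complex.exp_ne_zero, false_or, hfactor]

lemma exp_add_inv_eq_neg_two_mul_sin (z : ℂ) :
    cexp (π * I * (z + 1 / 2)) + (cexp (π * I * (z + 1 / 2)))⁻¹ = -2 * Complex.sin (π * z) := by
  have hcos : -2 * Complex.sin (π * z) = 2 * Complex.cos (π * z + π / 2) := by
    rw [Complex.cos_add_pi_div_two]
    ring
  rw [hcos, Complex.two_cos, ← Complex.exp_neg]
  congr 2 <;> ring

/-- With `E = e^{πi(z+1/2)}`, the pair is `q^{(n+1/2)²/2} (E^{2n+1} + E^{-(2n+1)})`, and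
`E + E⁻¹ = -2 sin(πz)` divides `E^{2n+1} + E^{-(2n+1)}`. -/
lemma jThetaTerm_add_jThetaTerm_neg_succ (z τ : ℂ) (n : ℕ) :
    jThetaTerm z τ n + jThetaTerm z τ (-(n + 1)) =
      cexp (π * I * τ / 4) * -2 * Complex.sin (π * z) * cexp (π * I * τ * n * (n + 1)) *
        ∑ i ∈ Finset.range (2 * n + 1),
          cexp (π * I * (z + 1 / 2)) ^ i * (-(cexp (π * I * (z + 1 / 2)))⁻¹) ^ (2 * n - i) := by
  set E := cexp (π * I * (z + 1 / 2))
  have hgeom := geom_sum₂_mul E (-E⁻¹) (2 * n + 1)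
  rw [Nat.add_sub_cancel, sub_neg_eq_add, exp_add_inv_eq_neg_two_mul_sin,
    Odd.neg_pow ⟨n, rfl⟩, sub_neg_eq_add] at hgeom
  have hpos : jThetaTerm z τ n = cexp (π * I * τ / 4) * cexp (π * I * τ * n * (n + 1)) *
      E ^ (2 * n + 1) := by
    rw [jThetaTerm, ← Complex.exp_nat_mul, ← Complex.exp_add, ← Complex.exp_add, ← Complex.exp_add]
    congr 1
    push_cast
    ring
  have hneg : jThetaTerm z τ (-(n + 1)) = cexp (π * I * τ / 4) * cexp (π * I * τ * n * (n + 1)) *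
      E⁻¹ ^ (2 * n + 1) := by
    rw [jThetaTerm, ← Complex.exp_neg, ← Complex.exp_nat_mul, ← Complex.exp_add,
      ← Complex.exp_add, ← Complex.exp_add]
    congr 1
    push_cast
    ring
  rw [hpos, hneg, ← mul_add, ← hgeom]
  ring

lemma jThetaTerm_zero_add_jThetaTerm_neg_one (z τ : ℂ) :
    jThetaTerm z τ 0 + jThetaTerm z τ (-1) = cexp (π * I * τ / 4) * -2 * Complex.sin (π * z) := by
  simpa using jThetaTerm_add_jThetaTerm_neg_succ z τ 0

lemma norm_jThetaTerm_add_jThetaTerm_neg_succ_le {z τ : ℂ} (hz : |z.im| ≤ τ.im / 2) (n : ℕ) :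
    ‖jThetaTerm z τ n + jThetaTerm z τ (-(n + 1))‖ ≤
      ‖jThetaTerm z τ 0 + jThetaTerm z τ (-1)‖ *
        ((2 * n + 1) * Real.exp (-(π * τ.im)) ^ n ^ 2) := by
  set E := cexp (π * I * (z + 1 / 2))
  have hE : ‖E‖ = Real.exp (-(π * z.im)) := by simp [E, norm_exp_pi_mul_I]
  have hbound : ∀ s : ℝ, |s| ≤ τ.im / 2 → Real.exp (-(π * s)) ≤ Real.exp (π * τ.im / 2) := by
    intro s hs
    rw [Real.exp_le_exp]
    nlinarith [Real.pi_pos, neg_abs_le s]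
  have hx : ‖E‖ ≤ Real.exp (π * τ.im / 2) := hE ▸ hbound z.im hz
  have hy : ‖-E⁻¹‖ ≤ Real.exp (π * τ.im / 2) := by
    rw [norm_neg, norm_inv, hE, ← Real.exp_neg, ← mul_neg]
    exact hbound (-z.im) (by rwa [abs_neg])
  have hsum := norm_geom_sum₂_le hx hy (2 * n + 1)
  have hq : ‖cexp (π * I * τ * n * (n + 1))‖ = Real.exp (-(π * τ.im)) ^ (n * (n + 1)) := by
    rw [mul_assoc, mul_assoc, norm_exp_pi_mul_I, ← Real.exp_nat_mul]
    congr 1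
    simp
    ring
  rw [jThetaTerm_add_jThetaTerm_neg_succ, jThetaTerm_zero_add_jThetaTerm_neg_one, norm_mul,
    norm_mul, hq, mul_assoc]
  refine mul_le_mul_of_nonneg_left ?_ (norm_nonneg _)
  calc Real.exp (-(π * τ.im)) ^ (n * (n + 1)) *
        ‖∑ i ∈ Finset.range (2 * n + 1), E ^ i * (-E⁻¹) ^ (2 * n - i)‖
      ≤ Real.exp (-(π * τ.im)) ^ (n * (n + 1)) *
          ((2 * n + 1) * Real.exp (π * τ.im / 2) ^ (2 * n)) := by
        gcongr
        simpa using hsum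
    _ = (2 * n + 1) * Real.exp (-(π * τ.im)) ^ n ^ 2 := by
        rw [← Real.exp_nat_mul, ← Real.exp_nat_mul, ← Real.exp_nat_mul, mul_left_comm,
          ← Real.exp_add]
        congr 2
        push_cast
        ring

lemma jTheta_ne_zero_of_abs_im_le {z τ : ℂ} (hτ : 1 / 2 ≤ τ.im) (hz : |z.im| ≤ τ.im / 2)
    (hzℤ : ∀ k : ℤ, z ≠ k) : jTheta z τ ≠ 0 := by
  set x := Real.exp (-(π * τ.im))
  have hx0 : 0 ≤ x := (Real.exp_pos _).le
  have hx : x ≤ 1 / 4 :=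
    (Real.exp_le_exp.mpr (by nlinarith [Real.pi_pos])).trans exp_neg_pi_div_two_le
  have hsin : Complex.sin (π * z) ≠ 0 := by
    rw [Ne, Complex.sin_eq_zero_iff]
    rintro ⟨k, hk⟩
    exact hzℤ k (mul_left_cancel₀ (Complex.ofReal_ne_zero.mpr Real.pi_ne_zero) (by rw [hk]; ring))
  rw [jTheta_eq_tsum_jThetaTerm, ← tsum_nat_add_neg_add_one (summable_jThetaTerm (by linarith) z)]
  refine tsum_ne_zero_of_norm_le_geometric (c := 3 * x) (r := 3 * x ^ 2) ?_ (by positivity)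
    (by positivity) (by nlinarith) fun n => ?_
  · simpa [jThetaTerm_zero_add_jThetaTerm_neg_one] using hsin
  · refine (norm_jThetaTerm_add_jThetaTerm_neg_succ_le hz (n + 1)).trans ?_
    rw [mul_assoc _ (3 * x)]
    exact mul_le_mul_of_nonneg_left (two_mul_add_one_mul_pow_sq_le hx0 (by linarith) n)
      (norm_nonneg _)

lemma jTheta_ne_zero_of_half_le_im {z τ : ℂ} (hτ : 1 / 2 ≤ τ.im) (h : NotLattice z τ) :
    jTheta z τ ≠ 0 := by
  have hτ0 : 0 < τ.im := by linarith
  set m := round (z.im / τ.im)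
  have hz : |(z - m * τ).im| ≤ τ.im / 2 := by
    have hround := abs_sub_round (z.im / τ.im)
    rw [← mul_le_mul_iff_of_pos_right hτ0, ← abs_of_pos hτ0, ← abs_mul, abs_of_pos hτ0,
      sub_mul, div_mul_cancel₀ _ hτ0.ne'] at hround
    simpa [mul_comm] using hround.trans_eq (by ring)
  have hshift := jTheta_add_int_mul_left (z - m * τ) τ m
  rw [sub_add_cancel] at hshift
  rw [hshift]
  exact mul_ne_zero (Complex.exp_ne_zero _)
    (jTheta_ne_zero_of_abs_im_le hτ hz ((h.sub_int_mul m).ne_intCast))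

lemma two_mul_im_le_im_neg_inv {τ : ℂ} (hτ : 0 < τ.im) (hre : |τ.re| ≤ 1 / 2)
    (him : τ.im < 1 / 2) : 2 * τ.im ≤ (-1 / τ).im := by
  have hnormSq : Complex.normSq τ < 1 / 2 := by
    rw [Complex.normSq_apply]
    nlinarith [abs_le.mp hre]
  have hpos : 0 < Complex.normSq τ := Complex.normSq_pos.mpr (fun h => by simp [h] at hτ)
  rw [neg_div, Complex.neg_im, one_div, Complex.inv_im, neg_div, neg_neg,
    le_div_iff₀ hpos]
  nlinarith

theorem jTheta_ne_zero {z τ : ℂ} (hτ : 0 < τ.im) (h : NotLattice z τ) : jTheta z τ ≠ 0 := by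
  obtain ⟨k, hk⟩ : ∃ k : ℕ, 1 / 2 ≤ 2 ^ k * τ.im := by
    obtain ⟨k, hk⟩ := pow_unbounded_of_one_lt (1 / 2 / τ.im) (one_lt_two (α := ℝ))
    exact ⟨k, by rw [div_lt_iff₀ hτ] at hk; linarith⟩
  induction k generalizing z τ with
  | zero => exact jTheta_ne_zero_of_half_le_im (by simpa using hk) h
  | succ k ih =>
    rcases le_or_gt (1 / 2) τ.im with hlarge | hsmall
    · exact jTheta_ne_zero_of_half_le_im hlarge h
    set τ' := τ + ((-round τ.re : ℤ) : ℂ)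
    have him : τ'.im = τ.im := by simp [τ']
    have hre : |τ'.re| ≤ 1 / 2 := by
      simpa [τ', ← sub_eq_add_neg] using abs_sub_round τ.re
    have hτ' : τ' ≠ 0 := fun h0 => by simp [h0] at him; linarith
    have hdouble := two_mul_im_le_im_neg_inv (him ▸ hτ) hre (him ▸ hsmall)
    have hS : jTheta (z / τ') (-1 / τ') ≠ 0 :=
      ih (by linarith) ((h.add_int_right _).div_neg_inv hτ')
        (by rw [pow_succ] at hk; nlinarith [pow_pos (two_pos (α := ℝ)) k])
    have hT : jTheta z τ' ≠ 0 := (jTheta_eq_zero_iff_jTheta_div_eq_zero hτ' z).not.mpr hS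
    rw [jTheta_add_int_right] at hT
    exact right_ne_zero_of_mul hT

noncomputable def muTerm (z₁ z₂ τ : ℂ) (n : ℤ) : ℂ :=
  (-cexp (2 * π * I * z₂)) ^ n * cexp (π * I * τ * n * (n + 1)) /
    (1 - cexp (2 * π * I * z₁) * cexp (2 * π * I * τ) ^ n)

lemma mu_eq_tsum_muTerm (z₁ z₂ τ : ℂ) :
    mu z₁ z₂ τ = cexp (π * I * z₁) / jTheta z₂ τ * ∑' n, muTerm z₁ z₂ τ n := rfl

lemma norm_exp_mul_exp_zpow (z τ : ℂ) (n : ℤ) :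
    ‖cexp (2 * π * I * z) * cexp (2 * π * I * τ) ^ n‖ =
      Real.exp (-(2 * π * z.im) - n * (2 * π * τ.im)) := by
  rw [← Complex.exp_int_mul, ← Complex.exp_add, Complex.norm_exp]
  congr 1
  simp
  ring

lemma eventually_half_le_norm_one_sub_exp_mul_exp_zpow {τ : ℂ} (hτ : 0 < τ.im) (z : ℂ) :
    ∀ᶠ n : ℤ in cofinite, 1 / 2 ≤ ‖1 - cexp (2 * π * I * z) * cexp (2 * π * I * τ) ^ n‖ := by
  have hc : 0 < 2 * π * τ.im := by positivity
  rw [Int.cofinite_eq, eventually_sup]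
  constructor
  · have hlin : Tendsto (fun n : ℤ => -(2 * π * z.im) - n * (2 * π * τ.im)) atBot atTop :=
      tendsto_atTop_add_const_left _ _ (tendsto_neg_atBot_atTop.comp
        ((tendsto_intCast_atBot_iff.mpr tendsto_id).atBot_mul_const hc))
    filter_upwards [(Real.tendsto_exp_atTop.comp hlin).eventually_ge_atTop 2] with n hn
    have := norm_sub_norm_le (cexp (2 * π * I * z) * cexp (2 * π * I * τ) ^ n) 1
    rw [norm_exp_mul_exp_zpow, norm_one, norm_sub_rev] at this
    simp only [Function.comp_apply] at hn
    linarith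
  · have hlin : Tendsto (fun n : ℤ => -(2 * π * z.im) - n * (2 * π * τ.im)) atTop atBot :=
      tendsto_atBot_add_const_left _ _ (tendsto_neg_atTop_atBot.comp
        (tendsto_intCast_atTop_atTop.atTop_mul_const hc))
    filter_upwards [(Real.tendsto_exp_atBot.comp hlin).eventually_lt_const
      (show (0 : ℝ) < 1 / 2 by norm_num)] with n hn
    have := norm_sub_norm_le 1 (cexp (2 * π * I * z) * cexp (2 * π * I * τ) ^ n)
    rw [norm_exp_mul_exp_zpow, norm_one] at this
    simp only [Function.comp_apply] at hn
    linarith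

lemma neg_exp_zpow (z : ℂ) (n : ℤ) :
    (-cexp (2 * π * I * z)) ^ n = cexp (n * (2 * π * I * z + π * I)) := by
  rw [Complex.exp_int_mul, Complex.exp_add, Complex.exp_pi_mul_I, mul_neg_one]

lemma neg_exp_zpow_mul_exp_eq_jacobiTheta₂_term (z τ : ℂ) (n : ℤ) :
    (-cexp (2 * π * I * z)) ^ n * cexp (π * I * τ * n * (n + 1)) =
      jacobiTheta₂_term n (z + 1 / 2 + τ / 2) τ := by
  rw [neg_exp_zpow, jacobiTheta₂_term, ← Complex.exp_add]
  ring_nf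

lemma summable_muTerm {τ : ℂ} (hτ : 0 < τ.im) (z₁ z₂ : ℂ) : Summable (muTerm z₁ z₂ τ) := by
  have hθ : Summable fun n => ‖jacobiTheta₂_term n (z₂ + 1 / 2 + τ / 2) τ‖ :=
    summable_norm_iff.mpr ((summable_jacobiTheta₂_term_iff _ _).mpr hτ)
  refine Summable.of_norm_bounded_eventually (hθ.mul_left 2) ?_
  filter_upwards [eventually_half_le_norm_one_sub_exp_mul_exp_zpow hτ z₁] with n hn
  rw [muTerm, norm_div, neg_exp_zpow_mul_exp_eq_jacobiTheta₂_term, div_le_iff₀ (by linarith)]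
  nlinarith [norm_nonneg (jacobiTheta₂_term n (z₂ + 1 / 2 + τ / 2) τ)]

lemma one_sub_exp_mul_exp_zpow_ne_zero {z τ : ℂ} (h : NotLattice z τ) (n : ℤ) :
    1 - cexp (2 * π * I * z) * cexp (2 * π * I * τ) ^ n ≠ 0 := by
  rw [sub_ne_zero, ne_comm, ← Complex.exp_int_mul, ← Complex.exp_add, Ne,
    Complex.exp_eq_one_iff]
  rintro ⟨k, hk⟩
  refine h (-n) k (mul_left_cancel₀ two_pi_I_ne_zero ?_)
  push_cast
  linear_combination hk

lemma muTerm_add_muTerm_add_tau_sub_one {z₁ τ : ℂ} (h₁ : NotLattice z₁ τ) (z₂ : ℂ) (n : ℤ) :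
    muTerm z₁ z₂ τ n + cexp (2 * π * I * z₂) * (cexp (2 * π * I * z₁))⁻¹ *
        muTerm (z₁ + τ) z₂ τ (n - 1) =
      -(cexp (2 * π * I * z₁))⁻¹ *
        ((-cexp (2 * π * I * z₂)) ^ n * cexp (π * I * τ * n * (n - 1))) := by
  have hden : cexp (2 * π * I * (z₁ + τ)) * cexp (2 * π * I * τ) ^ (n - 1) =
      cexp (2 * π * I * z₁) * cexp (2 * π * I * τ) ^ n := by
    rw [zpow_sub_one₀ (Complex.exp_ne_zero _), mul_add, Complex.exp_add]
    field_simp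
  have hnum : cexp (π * I * τ * n * (n + 1)) =
      cexp (π * I * τ * n * (n - 1)) * cexp (2 * π * I * τ) ^ n := by
    rw [← Complex.exp_int_mul, ← Complex.exp_add]
    ring_nf
  have hnum' : cexp (π * I * τ * ((n - 1 : ℤ) : ℂ) * (((n - 1 : ℤ) : ℂ) + 1)) =
      cexp (π * I * τ * n * (n - 1)) := by
    push_cast
    ring_nf
  have hD := one_sub_exp_mul_exp_zpow_ne_zero h₁ n
  rw [muTerm, muTerm, hden, hnum, hnum', zpow_sub_one₀ (neg_ne_zero.mpr (Complex.exp_ne_zero _))]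
  have ha : cexp (2 * π * I * z₁) ≠ 0 := Complex.exp_ne_zero _
  have hb : cexp (2 * π * I * z₂) ≠ 0 := Complex.exp_ne_zero _
  generalize cexp (2 * π * I * z₁) = a at *
  generalize cexp (2 * π * I * z₂) = b at *
  generalize cexp (2 * π * I * τ) ^ n = Q at *
  rw [mul_comm a Q] at hD
  field_simp
  ring

lemma tsum_neg_exp_zpow_mul_exp_eq_jTheta (z τ : ℂ) :
    ∑' n : ℤ, (-cexp (2 * π * I * z)) ^ n * cexp (π * I * τ * n * (n - 1)) =
      I * cexp (π * I * z) * cexp (-π * I * τ / 4) * jTheta z τ := by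
  have hI : I * cexp (π * I * z) * cexp (-π * I * τ / 4) =
      cexp (π / 2 * I + π * I * z + -π * I * τ / 4) := by
    rw [Complex.exp_add, Complex.exp_add, Complex.exp_pi_div_two_mul_I]
  rw [jTheta_eq_tsum_jThetaTerm, ← tsum_mul_left, ← (Equiv.addRight (1 : ℤ)).tsum_eq, hI]
  refine tsum_congr fun n => ?_
  rw [Equiv.coe_addRight, neg_exp_zpow, jThetaTerm]
  simp only [← Complex.exp_add]
  congr 1
  push_cast
  ring

lemma tsum_muTerm_add_tsum_muTerm_add_tau {z₁ τ : ℂ} (hτ : 0 < τ.im) (h₁ : NotLattice z₁ τ)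
    (z₂ : ℂ) :
    ∑' n, muTerm z₁ z₂ τ n + cexp (2 * π * I * z₂) * (cexp (2 * π * I * z₁))⁻¹ *
        ∑' n, muTerm (z₁ + τ) z₂ τ n =
      -(cexp (2 * π * I * z₁))⁻¹ *
        (I * cexp (π * I * z₂) * cexp (-π * I * τ / 4) * jTheta z₂ τ) := by
  have hshift : ∑' n, muTerm (z₁ + τ) z₂ τ n = ∑' n, muTerm (z₁ + τ) z₂ τ (n - 1) :=
    ((Equiv.subRight (1 : ℤ)).tsum_eq _).symm
  have hsummable : Summable fun n => muTerm (z₁ + τ) z₂ τ (n - 1) :=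
    (summable_muTerm hτ (z₁ + τ) z₂).comp_injective (sub_left_injective (b := 1))
  rw [hshift, ← tsum_neg_exp_zpow_mul_exp_eq_jTheta, ← tsum_mul_left, ← tsum_mul_left,
    ← (summable_muTerm hτ z₁ z₂).tsum_add (hsummable.mul_left _)]
  exact tsum_congr (muTerm_add_muTerm_add_tau_sub_one h₁ z₂)

theorem stmt14 (τ z₁ z₂ : ℂ) (hτ : 0 < τ.im)
    (h₁ : NotLattice z₁ τ) (h₂ : NotLattice z₂ τ) :
    mu z₁ z₂ τ
        + Complex.exp (2 * Real.pi * Complex.I * z₂) *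
            (Complex.exp (2 * Real.pi * Complex.I * z₁))⁻¹ *
            Complex.exp (-Real.pi * Complex.I * τ) * mu (z₁ + τ) z₂ τ
      = -Complex.I * Complex.exp (Real.pi * Complex.I * z₂) *
          Complex.exp (-Real.pi * Complex.I * z₁) *
          Complex.exp (-Real.pi * Complex.I * τ / 4) := by
  have hθ := jTheta_ne_zero hτ h₂
  have hseries := tsum_muTerm_add_tsum_muTerm_add_tau hτ h₁ z₂
  have hz₁ : cexp (2 * π * I * z₁) = cexp (π * I * z₁) ^ 2 := by
    rw [← Complex.exp_nat_mul]; ring_nf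
  have hz₁' : cexp (-π * I * z₁) = (cexp (π * I * z₁))⁻¹ := by
    rw [← Complex.exp_neg]; ring_nf
  have hτ' : cexp (-π * I * τ) = (cexp (π * I * τ))⁻¹ := by
    rw [← Complex.exp_neg]; ring_nf
  rw [mu_eq_tsum_muTerm, mu_eq_tsum_muTerm, mul_add, Complex.exp_add, hz₁', hτ']
  rw [hz₁] at hseries ⊢
  have he₁ : cexp (π * I * z₁) ≠ 0 := Complex.exp_ne_zero _
  have heτ : cexp (π * I * τ) ≠ 0 := Complex.exp_ne_zero _
  generalize cexp (π * I * z₁) = e₁ at *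
  generalize cexp (π * I * τ) = eτ at *
  generalize jTheta z₂ τ = θ at *
  linear_combination (norm := (field_simp; ring)) (e₁ / θ) * hseries
end

section
/- For |q| < 1, the identity q^{1/12}·c_{yz2,2}(τ) = ∑_{n≥a≥0} (2n+4) q^{n+an+1-a²} = (1 - E₂(q))/6 holds, where E₂(q) = 1 - 24∑_{n≥1}σ₁(n)qⁿ and the sum runs over integer pairs with n ≥ a ≥ 0. -/
/-!
Substituting `u = a + 1`, `v = n - a + 1` identifies the pairs `n ≥ a ≥ 0` with pairs of positive
integers, and turns `n + an + 1 - a²` into `uv` and `2n + 4` into `2(u + v)`. The series becomes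
`2 ∑_{u,v ≥ 1} (u + v) q^{uv}`; by the symmetry `u ↔ v` this is `4 ∑_{u,v ≥ 1} v q^{uv}`, and
grouping the terms by `N = uv` gives the Lambert series `4 ∑_N σ₁(N) q^N = (1 - E₂(q)) / 6`.
-/

noncomputable def sigma1 (n : ℕ) : ℕ := ∑ d ∈ n.divisors, d

noncomputable def E2 (q : ℂ) : ℂ := 1 - 24 * ∑' n : ℕ, (sigma1 (n + 1) : ℂ) * q ^ (n + 1)

open ArithmeticFunction
open scoped ArithmeticFunction.sigma

section LambertSeries

variable {𝕜 : Type*} [NontriviallyNormedField 𝕜] [CompleteSpace 𝕜] [NormSMulClass ℤ 𝕜]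

theorem tsum_prod_pnat_pow_add_pow_mul_pow_eq_tsum_sigma (k : ℕ) {r : 𝕜} (hr : ‖r‖ < 1) :
    ∑' c : ℕ+ × ℕ+, ((c.1 : 𝕜) ^ k + (c.2 : 𝕜) ^ k) * r ^ (c.1 * c.2 : ℕ) =
      2 * ∑' e : ℕ+, σ k e * r ^ (e : ℕ) := by
  have hsum := summable_prod_mul_pow k hr
  have hswap (c : ℕ+ × ℕ+) :
      (c.swap.2 : 𝕜) ^ k * r ^ (c.swap.1 * c.swap.2 : ℕ) = (c.1 : 𝕜) ^ k * r ^ (c.1 * c.2 : ℕ) := by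
    simp [Nat.mul_comm]
  have hsnd :
      ∑' c : ℕ+ × ℕ+, (c.2 : 𝕜) ^ k * r ^ (c.1 * c.2 : ℕ) = ∑' e : ℕ+, σ k e * r ^ (e : ℕ) := by
    rw [hsum.tsum_prod, tsum_prod_pow_eq_tsum_sigma k hr]
  have hfst :
      ∑' c : ℕ+ × ℕ+, (c.1 : 𝕜) ^ k * r ^ (c.1 * c.2 : ℕ) = ∑' e : ℕ+, σ k e * r ^ (e : ℕ) := by
    rw [← hsnd, ← (Equiv.prodComm ℕ+ ℕ+).tsum_eq]
    exact tsum_congr fun c => by simp [Nat.mul_comm]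
  simp only [add_mul]
  rw [(hsum.prod_symm.congr hswap).tsum_add hsum, hfst, hsnd, two_mul]

end LambertSeries

theorem one_sub_E2 (q : ℂ) : 1 - E2 q = 24 * ∑' n : ℕ+, (σ 1 n : ℂ) * q ^ (n : ℕ) := by
  rw [E2, tsum_pnat_eq_tsum_succ (f := fun n => (σ 1 n : ℂ) * q ^ n), sub_sub_cancel]
  simp only [sigma1, sigma_one_apply]

def pnatProdEquivTriangle : ℕ+ × ℕ+ ≃ {p : ℕ × ℕ // p.2 ≤ p.1} where
  toFun c := ⟨(c.1.natPred + c.2.natPred, c.1.natPred), Nat.le_add_right _ _⟩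
  invFun p := ((p : ℕ × ℕ).2.succPNat, ((p : ℕ × ℕ).1 - (p : ℕ × ℕ).2).succPNat)
  left_inv c := by simp
  right_inv p := by
    obtain ⟨⟨n, a⟩, h : a ≤ n⟩ := p
    ext <;> simp [Nat.add_sub_cancel' h]

theorem pnatProdEquivTriangle_summand {K : Type*} [Field K] (q : K) (c : ℕ+ × ℕ+) :
    (2 * ((pnatProdEquivTriangle c : ℕ × ℕ).1 : K) + 4) *
        q ^ (((pnatProdEquivTriangle c : ℕ × ℕ).1 : ℤ) +
          ((pnatProdEquivTriangle c : ℕ × ℕ).2 : ℤ) * ((pnatProdEquivTriangle c : ℕ × ℕ).1 : ℤ) +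
            1 - ((pnatProdEquivTriangle c : ℕ × ℕ).2 : ℤ) ^ 2) =
      2 * (((c.1 : K) ^ 1 + (c.2 : K) ^ 1) * q ^ (c.1 * c.2 : ℕ)) := by
  obtain ⟨⟨a, b⟩, rfl⟩ := (Equiv.pnatEquivNat.prodCongr Equiv.pnatEquivNat).symm.surjective c
  have hexp : ((a + b : ℕ) : ℤ) + a * (a + b : ℕ) + 1 - (a : ℤ) ^ 2 = ((a + 1) * (b + 1) : ℕ) := by
    push_cast
    ring
  simp only [pnatProdEquivTriangle, Equiv.prodCongr_symm, Equiv.prodCongr_apply, Prod.map,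
    Equiv.pnatEquivNat_symm_apply, Equiv.coe_fn_mk, Nat.natPred_succPNat, hexp, zpow_natCast,
    Nat.succPNat_coe, Nat.succ_eq_add_one]
  push_cast
  ring

theorem stmt18 (q : ℂ) (hq : ‖q‖ < 1) :
    ∑' p : {p : ℕ × ℕ // p.2 ≤ p.1},
        ((2 * ((p : ℕ × ℕ).1 : ℂ) + 4) *
          q ^ (((p : ℕ × ℕ).1 : ℤ) + ((p : ℕ × ℕ).2 : ℤ) * ((p : ℕ × ℕ).1 : ℤ) + 1
                - ((p : ℕ × ℕ).2 : ℤ) ^ 2))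
      = (1 - E2 q) / 6 := by
  rw [← pnatProdEquivTriangle.tsum_eq, tsum_congr (pnatProdEquivTriangle_summand q), tsum_mul_left,
    tsum_prod_pnat_pow_add_pow_mul_pow_eq_tsum_sigma 1 hq, one_sub_E2]
  ring
end
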